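/- Let $\mathcal{D}$ be a Cartan datum of type $A_n$ over a finite abelian group $\Gamma$ and $\mu \in k^{\Phi^+}$ arbitrary. Then there is exactly one family $\mu' \in k^{\Phi^+}$ with $\mu'_{ij} = 0$ whenever $g_{ij}^N = 1$ (condition (R1)) such that $u_{ij}(\mu) = u_{ij}(\mu')$ in $k[\Gamma]$ for all $1 \leq i < j \leq n+1$. Moreover if $\mu$ satisfies (R2) then so does $\mu'$. -/

import Mathlib

/-!
If `g_{ip}^N = 1`, then `1 - g_{pj}^N = 1 - g_{ij}^N`, so the term `(q-1)^N μ_{ip} u_{pj}` of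
`u_{ij}` can be absorbed into the coefficient of `1 - g_{ij}^N`. Doing this recursively gives
coefficients `ν_{ij}`, and `u(μ)` satisfies the recursion defining `u(μ')` for
`μ'_{ij} = ν_{ij}` (or `0` when `g_{ij}^N = 1`), hence `u(μ) = u(μ')`. Uniqueness follows by
induction on `j - i` from `1 - h ≠ 0` in `k[Γ]` for `h ≠ 1`, and (R2) passes from `μ` to `ν`
because `χ_{ij}^N = χ_{ip}^N χ_{pj}^N`.
-/

/-- The elements `u_{ij}(μ)` of the group algebra `k[Γ]`, defined inductively by
`u_{ij}(μ) = μ_{ij}(1 - g_{ij}^N) + ∑_{i<p<j} (q-1)^N μ_{ip} u_{pj}(μ)`. -/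
noncomputable def uElt {k : Type*} [Field k] {Γ : Type*} [CommGroup Γ]
    (g : ℕ → Γ) (q : k) (N : ℕ) (μ : ℕ → ℕ → k) : ℕ → ℕ → MonoidAlgebra k Γ
  | i, j =>
    μ i j • ((1 : MonoidAlgebra k Γ)
        - MonoidAlgebra.of k Γ ((∏ t ∈ Finset.Ico i j, g t) ^ N))
      + ∑ p ∈ (Finset.Ioo i j).attach,
          ((q - 1) ^ N * μ i ↑p) • uElt g q N μ ↑p j
  termination_by i j => j - i
  decreasing_by
    have := Finset.mem_Ioo.mp p.2
    omega

open Finset MonoidAlgebra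

section SegPow

variable {M : Type*} [CommMonoid M] (g : ℕ → M) (N : ℕ)

def segPow (i j : ℕ) : M := (∏ t ∈ Ico i j, g t) ^ N

lemma segPow_trans {i p j : ℕ} (hip : i ≤ p) (hpj : p ≤ j) :
    segPow g N i j = segPow g N i p * segPow g N p j := by
  rw [segPow, segPow, segPow, ← prod_Ico_consecutive _ hip hpj, mul_pow]

lemma segPow_eq_of_segPow_eq_one {i p j : ℕ} (hip : i ≤ p) (hpj : p ≤ j)
    (h : segPow g N i p = 1) : segPow g N p j = segPow g N i j := by
  rw [segPow_trans g N hip hpj, h, one_mul]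

end SegPow

section UElt

variable {k : Type*} [Field k] {Γ : Type*} [CommGroup Γ] (g : ℕ → Γ) (q : k) (N : ℕ)

variable (k) in
noncomputable def oneSubSegPow (i j : ℕ) : MonoidAlgebra k Γ := 1 - of k Γ (segPow g N i j)

lemma oneSubSegPow_ne_zero {i j : ℕ} (h : segPow g N i j ≠ 1) : oneSubSegPow k g N i j ≠ 0 :=
  fun h0 => h (of_injective ((sub_eq_zero.mp h0).symm.trans (map_one _).symm))

lemma uElt_eq (μ : ℕ → ℕ → k) (i j : ℕ) :
    uElt g q N μ i j = μ i j • oneSubSegPow k g N i j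
      + ∑ p ∈ Ioo i j, ((q - 1) ^ N * μ i p) • uElt g q N μ p j := by
  rw [uElt, sum_attach (Ioo i j) fun p => ((q - 1) ^ N * μ i p) • uElt g q N μ p j]
  rfl

lemma eq_uElt_of_recursion (μ : ℕ → ℕ → k) (w : ℕ → ℕ → MonoidAlgebra k Γ)
    (hw : ∀ i j, w i j = μ i j • oneSubSegPow k g N i j
      + ∑ p ∈ Ioo i j, ((q - 1) ^ N * μ i p) • w p j) (i j : ℕ) :
    w i j = uElt g q N μ i j := by
  induction hd : j - i using Nat.strong_induction_on generalizing i with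
  | _ d ih =>
    rw [hw, uElt_eq]
    refine congrArg _ (sum_congr rfl fun p hp => ?_)
    have := mem_Ioo.mp hp
    rw [ih (j - p) (by omega) p rfl]

end UElt

section Normalization

variable {k : Type*} [Field k] {Γ : Type*} [CommGroup Γ] [DecidableEq Γ]
  (g : ℕ → Γ) (q : k) (N : ℕ)

noncomputable def absorbedCoeff (μ : ℕ → ℕ → k) : ℕ → ℕ → k
  | i, j => μ i j + ∑ p ∈ ((Ioo i j).filter (segPow g N i · = 1)).attach,
      (q - 1) ^ N * μ i p * absorbedCoeff μ p j
  termination_by i j => j - i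
  decreasing_by
    have := mem_Ioo.mp (mem_filter.mp p.2).1
    omega

lemma absorbedCoeff_eq (μ : ℕ → ℕ → k) (i j : ℕ) :
    absorbedCoeff g q N μ i j = μ i j + ∑ p ∈ (Ioo i j).filter (segPow g N i · = 1),
      (q - 1) ^ N * μ i p * absorbedCoeff g q N μ p j := by
  rw [absorbedCoeff, sum_attach _ fun p => (q - 1) ^ N * μ i p * absorbedCoeff g q N μ p j]

noncomputable def normalizedCoeff (μ : ℕ → ℕ → k) (i j : ℕ) : k :=
  if segPow g N i j = 1 then 0 else absorbedCoeff g q N μ i j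

lemma normalizedCoeff_smul_oneSubSegPow (μ : ℕ → ℕ → k) (i j : ℕ) :
    normalizedCoeff g q N μ i j • oneSubSegPow k g N i j
      = absorbedCoeff g q N μ i j • oneSubSegPow k g N i j := by
  by_cases h : segPow g N i j = 1
  · rw [oneSubSegPow, h, map_one, sub_self, smul_zero, smul_zero]
  · rw [normalizedCoeff, if_neg h]

lemma sum_normalizedCoeff_smul (μ : ℕ → ℕ → k) (i j : ℕ) (f : ℕ → MonoidAlgebra k Γ) :
    ∑ p ∈ Ioo i j, ((q - 1) ^ N * normalizedCoeff g q N μ i p) • f p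
      = ∑ p ∈ (Ioo i j).filter (segPow g N i · ≠ 1),
          ((q - 1) ^ N * absorbedCoeff g q N μ i p) • f p := by
  rw [sum_filter]
  refine sum_congr rfl fun p _ => ?_
  by_cases h : segPow g N i p = 1 <;> simp [normalizedCoeff, h]

lemma uElt_eq_of_segPow_eq_one (μ : ℕ → ℕ → k) {i p j : ℕ} (hip : i ≤ p) (hpj : p ≤ j)
    (hG : segPow g N i p = 1)
    (hrec : uElt g q N μ p j = normalizedCoeff g q N μ p j • oneSubSegPow k g N p j
      + ∑ r ∈ Ioo p j, ((q - 1) ^ N * normalizedCoeff g q N μ p r) • uElt g q N μ r j) :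
    uElt g q N μ p j = absorbedCoeff g q N μ p j • oneSubSegPow k g N i j
      + ∑ r ∈ (Ioo p j).filter (segPow g N i · ≠ 1),
          ((q - 1) ^ N * absorbedCoeff g q N μ p r) • uElt g q N μ r j := by
  rw [hrec, normalizedCoeff_smul_oneSubSegPow, sum_normalizedCoeff_smul, oneSubSegPow,
    oneSubSegPow, segPow_eq_of_segPow_eq_one g N hip hpj hG]
  congr 1
  refine sum_congr (filter_congr fun r hr => ?_) fun _ _ => rfl
  rw [segPow_eq_of_segPow_eq_one g N hip (mem_Ioo.mp hr).1.le hG]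

lemma uElt_eq_normalized (μ : ℕ → ℕ → k) (i j : ℕ) :
    uElt g q N μ i j = normalizedCoeff g q N μ i j • oneSubSegPow k g N i j
      + ∑ p ∈ Ioo i j, ((q - 1) ^ N * normalizedCoeff g q N μ i p) • uElt g q N μ p j := by
  induction hd : j - i using Nat.strong_induction_on generalizing i with
  | _ d ih =>
    have absorb : ∀ p ∈ (Ioo i j).filter (segPow g N i · = 1),
        ((q - 1) ^ N * μ i p) • uElt g q N μ p j
          = ((q - 1) ^ N * μ i p * absorbedCoeff g q N μ p j) • oneSubSegPow k g N i j
            + ∑ r ∈ (Ioo p j).filter (segPow g N i · ≠ 1),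
              ((q - 1) ^ N * μ i p * ((q - 1) ^ N * absorbedCoeff g q N μ p r))
                • uElt g q N μ r j := by
      intro p hp
      obtain ⟨hp, hG⟩ := mem_filter.mp hp
      have hp := mem_Ioo.mp hp
      rw [uElt_eq_of_segPow_eq_one g q N μ hp.1.le hp.2.le hG (ih (j - p) (by omega) p rfl),
        smul_add, smul_sum]
      simp only [smul_smul]
    have swap : ∑ p ∈ (Ioo i j).filter (segPow g N i · = 1),
          ∑ r ∈ (Ioo p j).filter (segPow g N i · ≠ 1),
            ((q - 1) ^ N * μ i p * ((q - 1) ^ N * absorbedCoeff g q N μ p r))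
              • uElt g q N μ r j
        = ∑ r ∈ (Ioo i j).filter (segPow g N i · ≠ 1),
          ∑ p ∈ (Ioo i r).filter (segPow g N i · = 1),
            ((q - 1) ^ N * μ i p * ((q - 1) ^ N * absorbedCoeff g q N μ p r))
              • uElt g q N μ r j := by
      refine sum_comm' fun p r => ?_
      simp only [mem_filter, mem_Ioo]
      constructor <;> rintro ⟨⟨⟨h1, h2⟩, h3⟩, ⟨h4, h5⟩, h6⟩ <;>
        exact ⟨⟨⟨by omega, by omega⟩, h3⟩, ⟨by omega, by omega⟩, h6⟩
    have collect : ∀ r ∈ (Ioo i j).filter (segPow g N i · ≠ 1),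
        ((q - 1) ^ N * μ i r) • uElt g q N μ r j
          + ∑ p ∈ (Ioo i r).filter (segPow g N i · = 1),
            ((q - 1) ^ N * μ i p * ((q - 1) ^ N * absorbedCoeff g q N μ p r))
              • uElt g q N μ r j
        = ((q - 1) ^ N * absorbedCoeff g q N μ i r) • uElt g q N μ r j := by
      intro r _
      rw [← sum_smul, ← add_smul, absorbedCoeff_eq g q N μ i r, mul_add, mul_sum]
      congr 2
      exact sum_congr rfl fun p _ => by ring
    rw [uElt_eq, ← sum_filter_add_sum_filter_not _ (segPow g N i · = 1), sum_congr rfl absorb,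
      sum_add_distrib, swap, ← sum_smul, normalizedCoeff_smul_oneSubSegPow,
      sum_normalizedCoeff_smul, absorbedCoeff_eq g q N μ i j, add_smul, add_assoc, add_assoc,
      ← sum_congr rfl collect, sum_add_distrib]
    abel

lemma uElt_normalizedCoeff (μ : ℕ → ℕ → k) (i j : ℕ) :
    uElt g q N (normalizedCoeff g q N μ) i j = uElt g q N μ i j :=
  (eq_uElt_of_recursion g q N _ _ (uElt_eq_normalized g q N μ) i j).symm

lemma absorbedCoeff_eq_zero {M : Type*} [CommMonoid M] (χ : ℕ → M) {μ : ℕ → ℕ → k} {m n : ℕ}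
    (hμ : ∀ a b, m ≤ a → a < b → b ≤ n → segPow χ N a b ≠ 1 → μ a b = 0)
    {a b : ℕ} (ha : m ≤ a) (hab : a < b) (hb : b ≤ n) (hχ : segPow χ N a b ≠ 1) :
    absorbedCoeff g q N μ a b = 0 := by
  induction hd : b - a using Nat.strong_induction_on generalizing a with
  | _ d ih =>
    rw [absorbedCoeff_eq, hμ a b ha hab hb hχ, zero_add]
    refine sum_eq_zero fun p hp => ?_
    have hp := mem_Ioo.mp (mem_filter.mp hp).1
    by_cases hχp : segPow χ N a p = 1
    · rw [ih (b - p) (by omega) (by omega) hp.2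
        (segPow_eq_of_segPow_eq_one χ N hp.1.le hp.2.le hχp ▸ hχ) rfl, mul_zero]
    · rw [hμ a p ha hp.1 (by omega) hχp, mul_zero, zero_mul]

end Normalization

lemma eq_of_uElt_eq {k : Type*} [Field k] {Γ : Type*} [CommGroup Γ] (g : ℕ → Γ) (q : k)
    (N : ℕ) {μ₁ μ₂ : ℕ → ℕ → k} {m n : ℕ}
    (h₁ : ∀ a b, m ≤ a → a < b → b ≤ n → segPow g N a b = 1 → μ₁ a b = 0)
    (h₂ : ∀ a b, m ≤ a → a < b → b ≤ n → segPow g N a b = 1 → μ₂ a b = 0)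
    (hu : ∀ a b, m ≤ a → a < b → b ≤ n → uElt g q N μ₁ a b = uElt g q N μ₂ a b)
    {a b : ℕ} (ha : m ≤ a) (hab : a < b) (hb : b ≤ n) : μ₁ a b = μ₂ a b := by
  induction hd : b - a using Nat.strong_induction_on generalizing b with
  | _ d ih =>
    by_cases hG : segPow g N a b = 1
    · rw [h₁ a b ha hab hb hG, h₂ a b ha hab hb hG]
    have hsum : ∑ p ∈ Ioo a b, ((q - 1) ^ N * μ₁ a p) • uElt g q N μ₁ p b
        = ∑ p ∈ Ioo a b, ((q - 1) ^ N * μ₂ a p) • uElt g q N μ₂ p b := by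
      refine sum_congr rfl fun p hp => ?_
      have hp := mem_Ioo.mp hp
      rw [ih (p - a) (by omega) hp.1 (by omega) rfl, hu p b (by omega) hp.2 hb]
    have hX := hu a b ha hab hb
    rw [uElt_eq, uElt_eq, hsum] at hX
    exact smul_left_injective k (oneSubSegPow_ne_zero g N hG) (add_right_cancel hX)

theorem stmt_14_general {k : Type*} [Field k] {Γ : Type*} [CommGroup Γ]
    (n N : ℕ) (q : k) (g : ℕ → Γ) (χ : ℕ → Γ →* kˣ) (μ : ℕ → ℕ → k) :
    ∃ μ' : ℕ → ℕ → k,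
      (∀ a b, 1 ≤ a → a < b → b ≤ n + 1 →
        (∏ t ∈ Finset.Ico a b, g t) ^ N = 1 → μ' a b = 0) ∧
      (∀ a b, 1 ≤ a → a < b → b ≤ n + 1 → uElt g q N μ a b = uElt g q N μ' a b) ∧
      ((∀ a b, 1 ≤ a → a < b → b ≤ n + 1 →
          (∏ t ∈ Finset.Ico a b, χ t) ^ N ≠ 1 → μ a b = 0) →
        (∀ a b, 1 ≤ a → a < b → b ≤ n + 1 →
          (∏ t ∈ Finset.Ico a b, χ t) ^ N ≠ 1 → μ' a b = 0)) ∧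
      (∀ μ'' : ℕ → ℕ → k,
        (∀ a b, 1 ≤ a → a < b → b ≤ n + 1 →
          (∏ t ∈ Finset.Ico a b, g t) ^ N = 1 → μ'' a b = 0) →
        (∀ a b, 1 ≤ a → a < b → b ≤ n + 1 → uElt g q N μ a b = uElt g q N μ'' a b) →
        ∀ a b, 1 ≤ a → a < b → b ≤ n + 1 → μ'' a b = μ' a b) := by
  classical
  have hR1 : ∀ a b, segPow g N a b = 1 → normalizedCoeff g q N μ a b = 0 :=
    fun a b hG => if_pos hG
  refine ⟨normalizedCoeff g q N μ, fun a b _ _ _ => hR1 a b,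
    fun a b _ _ _ => (uElt_normalizedCoeff g q N μ a b).symm, ?_, ?_⟩
  · intro hμ a b ha hab hb hχ
    rw [normalizedCoeff]
    split_ifs
    · rfl
    · exact absorbedCoeff_eq_zero g q N χ hμ ha hab hb hχ
  · intro μ'' hR1'' hu a b ha hab hb
    refine eq_of_uElt_eq g q N hR1'' (fun a b _ _ _ => hR1 a b) (fun a b ha hab hb => ?_)
      ha hab hb
    rw [← hu a b ha hab hb, uElt_normalizedCoeff]

/-- **normalization.**  Let `𝒟` be a Cartan datum of type `A_n` over
a finite abelian group `Γ` and `μ ∈ k^{Φ⁺}` arbitrary.  There is exactly one family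
`μ'` satisfying (R1) (`μ'_{ij} = 0` whenever `g_{ij}^N = 1`) with
`u_{ij}(μ) = u_{ij}(μ')` for all `1 ≤ i < j ≤ n+1`; moreover if `μ` satisfies (R2)
then so does `μ'`. -/
theorem stmt_14 {k : Type*} [Field k] {Γ : Type*} [CommGroup Γ] [Fintype Γ]
    (n N : ℕ) (hn : 2 ≤ n) (hNodd : Odd N) (hN1 : 1 < N)
    (q : k) (hq : IsPrimitiveRoot q N)
    (g : ℕ → Γ) (χ : ℕ → Γ →* kˣ)
    (hdiag : ∀ l, 1 ≤ l → l ≤ n → ((χ l) (g l) : k) = q)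
    (hC1 : ∀ a b, 1 ≤ a → a ≤ n → 1 ≤ b → b ≤ n → (a + 1 = b ∨ b + 1 = a) →
      ((χ b) (g a) : k) * ((χ a) (g b) : k) = q⁻¹)
    (hC2 : ∀ a b, 1 ≤ a → a ≤ n → 1 ≤ b → b ≤ n → (a + 2 ≤ b ∨ b + 2 ≤ a) →
      ((χ b) (g a) : k) * ((χ a) (g b) : k) = 1)
    (μ : ℕ → ℕ → k) :
    ∃ μ' : ℕ → ℕ → k,
      (∀ a b, 1 ≤ a → a < b → b ≤ n + 1 →
        (∏ t ∈ Finset.Ico a b, g t) ^ N = 1 → μ' a b = 0) ∧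
      (∀ a b, 1 ≤ a → a < b → b ≤ n + 1 → uElt g q N μ a b = uElt g q N μ' a b) ∧
      ((∀ a b, 1 ≤ a → a < b → b ≤ n + 1 →
          (∏ t ∈ Finset.Ico a b, χ t) ^ N ≠ 1 → μ a b = 0) →
        (∀ a b, 1 ≤ a → a < b → b ≤ n + 1 →
          (∏ t ∈ Finset.Ico a b, χ t) ^ N ≠ 1 → μ' a b = 0)) ∧
      (∀ μ'' : ℕ → ℕ → k,
        (∀ a b, 1 ≤ a → a < b → b ≤ n + 1 →
          (∏ t ∈ Finset.Ico a b, g t) ^ N = 1 → μ'' a b = 0) →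
        (∀ a b, 1 ≤ a → a < b → b ≤ n + 1 → uElt g q N μ a b = uElt g q N μ'' a b) →
        ∀ a b, 1 ≤ a → a < b → b ≤ n + 1 → μ'' a b = μ' a b) :=
  stmt_14_general n N q g χ μ
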